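/- arXiv:0802.0898 — 6 statements merged into one kernel-verified Lean document; each statement's English description precedes it below -/
import Mathlib

section
/- Let f be a bounded holomorphic function on the bidisc D², continuous on the closed bidisc, with ‖f‖_∞ ≤ 1, such that f has no zeros on D × closure(D). Then there exists M > 0 such that for all z, w in D, 1/|f(z,w)| ≤ exp(M/(1−|z|)). -/
/-!
For fixed `w`, `u = log (1 / |f(·, w)|)` is a nonnegative harmonic function on the unit disc,
so Harnack's inequality gives `u z ≤ u 0 * (1 + |z|) / (1 - |z|) ≤ 2 u 0 / (1 - |z|)`. Since
`f(0, ·)` is continuous and zero-free on the closed disc, `u 0` is bounded uniformly in `w`.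

Harnack's inequality is obtained from the Borel–Carathéodory theorem, applied to a holomorphic
function whose real part is `-u`, with the upper bound `M > 0` on that real part tending to `0`.
-/

open Metric Complex Set Filter Topology InnerProductSpace

theorem Complex.neg_re_le_of_re_nonpos {F : ℂ → ℂ} {R : ℝ} {z : ℂ}
    (hF : DifferentiableOn ℂ F (ball 0 R)) (hre : MapsTo F (ball 0 R) {w | w.re ≤ 0})
    (hz : z ∈ ball 0 R) :
    -(F z).re ≤ -(F 0).re * (R + ‖z‖) / (R - ‖z‖) := by
  have hR : 0 < R := pos_of_mem_ball hz
  have hF0 : (F 0).re ≤ 0 := hre (mem_ball_self hR)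
  set G : ℂ → ℂ := fun x ↦ F x - (F 0).im * I
  have hG0 : ‖G 0‖ = -(F 0).re := by
    have : G 0 = ((F 0).re : ℂ) := by apply Complex.ext <;> simp [G]
    rw [this, norm_real, Real.norm_eq_abs, abs_of_nonpos hF0]
  have hle : ∀ M > 0,
      -(F z).re ≤ 2 * M * ‖z‖ / (R - ‖z‖) + -(F 0).re * (R + ‖z‖) / (R - ‖z‖) := by
    intro M hM
    have hGre : MapsTo G (ball 0 R) {w | w.re ≤ M} := fun x hx ↦ by
      simpa [G] using (hre hx).out.trans hM.le
    calc -(F z).re = -(G z).re := by simp [G]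
      _ ≤ ‖G z‖ := (neg_le_abs _).trans (abs_re_le_norm _)
      _ ≤ _ := hG0 ▸ borelCaratheodory hM (hF.sub_const _) hGre hR hz
  have hlim : Tendsto (fun M : ℝ ↦ 2 * M * ‖z‖ / (R - ‖z‖) + -(F 0).re * (R + ‖z‖) / (R - ‖z‖))
      (𝓝[>] 0) (𝓝 (-(F 0).re * (R + ‖z‖) / (R - ‖z‖))) :=
    tendsto_nhdsWithin_of_tendsto_nhds <| (by fun_prop : Continuous _).tendsto' 0 _ (by simp)
  exact ge_of_tendsto hlim (eventually_nhdsWithin_of_forall hle)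

theorem InnerProductSpace.HarmonicOnNhd.le_mul_div_of_nonneg {u : ℂ → ℝ} {R : ℝ} {z : ℂ}
    (hu : HarmonicOnNhd u (ball 0 R)) (hu₀ : ∀ x ∈ ball 0 R, 0 ≤ u x) (hz : z ∈ ball 0 R) :
    u z ≤ u 0 * (R + ‖z‖) / (R - ‖z‖) := by
  obtain ⟨F, hFan, hFre⟩ := hu.neg.exists_analyticOnNhd_ball_re_eq
  have hre : MapsTo F (ball 0 R) {w | w.re ≤ 0} := fun x hx ↦ by
    simpa [hFre hx] using hu₀ x hx
  have hFharnack := neg_re_le_of_re_nonpos hFan.differentiableOn hre hz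
  have hFz : (F z).re = -u z := hFre hz
  have hF0 : (F 0).re = -u 0 := hFre (mem_ball_self (pos_of_mem_ball hz))
  simpa only [hFz, hF0, neg_neg] using hFharnack

/-- If `f` is continuous on the closed bidisc, holomorphic on the open bidisc,
bounded by `1`, and has no zeros on `D × closure D`, then `1/|f(z,w)| ≤ exp(M/(1-|z|))`. -/
theorem stmt_0 (f : ℂ × ℂ → ℂ)
    (hcont : ContinuousOn f (closedBall (0:ℂ) 1 ×ˢ closedBall (0:ℂ) 1))
    (hdiff : DifferentiableOn ℂ f (ball (0:ℂ) 1 ×ˢ ball (0:ℂ) 1))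
    (hbound : ∀ p ∈ closedBall (0:ℂ) 1 ×ˢ closedBall (0:ℂ) 1, ‖f p‖ ≤ 1)
    (hne : ∀ z w : ℂ, ‖z‖ < 1 → ‖w‖ ≤ 1 → f (z, w) ≠ 0) :
    ∃ M : ℝ, 0 < M ∧ ∀ z w : ℂ, ‖z‖ < 1 → ‖w‖ < 1 →
      1 / ‖f (z, w)‖ ≤ Real.exp (M / (1 - ‖z‖)) := by
  have hcont₀ : ContinuousOn (fun w ↦ -Real.log ‖f (0, w)‖) (closedBall 0 1) := by
    refine ((hcont.comp (by fun_prop) fun w hw ↦ ⟨mem_closedBall_self zero_le_one, hw⟩).norm.log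
      fun w hw ↦ ?_).neg
    exact norm_ne_zero_iff.mpr (hne 0 w (by simp) (mem_closedBall_zero_iff.mp hw))
  obtain ⟨C, hC⟩ := (isCompact_closedBall (0 : ℂ) 1).exists_bound_of_continuousOn hcont₀
  have hC₀ : 0 ≤ C := (norm_nonneg _).trans (hC 0 (mem_closedBall_self zero_le_one))
  refine ⟨2 * C + 1, by positivity, fun z w hz hw ↦ ?_⟩
  set g : ℂ → ℂ := fun x ↦ f (x, w)
  have hg : DifferentiableOn ℂ g (ball 0 1) :=
    hdiff.comp (by fun_prop) fun x hx ↦ ⟨hx, mem_ball_zero_iff.mpr hw⟩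
  have hu : HarmonicOnNhd (fun x ↦ -Real.log ‖g x‖) (ball 0 1) := fun x hx ↦
    ((hg.analyticOnNhd isOpen_ball x hx).harmonicAt_log_norm
      (hne x w (mem_ball_zero_iff.mp hx) hw.le)).neg
  have hu₀ : ∀ x ∈ ball (0 : ℂ) 1, 0 ≤ -Real.log ‖g x‖ := fun x hx ↦
    neg_nonneg.mpr (Real.log_nonpos (norm_nonneg _)
      (hbound _ ⟨ball_subset_closedBall hx, mem_closedBall_zero_iff.mpr hw.le⟩))
  have harnack := hu.le_mul_div_of_nonneg hu₀ (mem_ball_zero_iff.mpr hz)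
  have hu0 : -Real.log ‖g 0‖ ≤ C :=
    (le_abs_self _).trans (hC w (mem_closedBall_zero_iff.mpr hw.le))
  have hgz : 0 < ‖g z‖ := norm_pos_iff.mpr (hne z w hz hw.le)
  calc 1 / ‖f (z, w)‖ = Real.exp (-Real.log ‖g z‖) := by
        rw [Real.exp_neg, Real.exp_log hgz, one_div]
    _ ≤ Real.exp ((2 * C + 1) / (1 - ‖z‖)) := by
      gcongr
      refine harnack.trans ?_
      gcongr
      nlinarith [hu₀ 0 (mem_ball_self one_pos), norm_nonneg z]
end

section
/- Let u(z,w) = (1−z)(1−w)/((1−z)^{1/2}+(1−w)^{1/2})² for z, w in the open unit disc D, where the square roots are principal. Then there exist constants c₁, c₂ > 0 such that for all (z,w) ∈ D², c₁ · min(|1−z|, |1−w|) ≤ |u(z,w)| ≤ c₂ · min(|1−z|, |1−w|). -/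
/-!
Write `a = (1 - z)^{1/2}`, `b = (1 - w)^{1/2}`, so that `|u| = |a|²|b|²/|a + b|²`. Both roots lie
in the sector `|Im| ≤ Re`, on which `Re (a b̄) ≥ 0`; hence
`|a|² + |b|² ≤ |a + b|² ≤ 2 (|a|² + |b|²)`. So `|u|` is comparable to the half harmonic mean
`XY/(X + Y)` of `X = |1 - z|`, `Y = |1 - w|`, which lies between `min(X, Y)/2` and `min(X, Y)`.
-/

open Metric Complex

noncomputable def u (z w : ℂ) : ℂ :=
  ((1 - z) * (1 - w)) / ((1 - z) ^ ((1:ℂ)/2) + (1 - w) ^ ((1:ℂ)/2)) ^ 2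

open ComplexConjugate

lemma min_div_four_le_mul_div_and_mul_div_le_min {X Y D : ℝ} (hX : 0 ≤ X) (hY : 0 ≤ Y)
    (hD : X + Y ≤ D) (hD' : D ≤ 2 * (X + Y)) :
    min X Y / 4 ≤ X * Y / D ∧ X * Y / D ≤ min X Y := by
  wlog hXY : X ≤ Y generalizing X Y
  · simpa only [min_comm, mul_comm] using this hY hX (by linarith) (by linarith) (by linarith)
  rw [min_eq_left hXY]
  rcases (add_nonneg hX hY).trans hD |>.eq_or_lt with hD0 | hD0
  · have hX0 : X = 0 := by linarith
    simp [← hD0, hX0]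
  rw [div_le_div_iff₀ (by norm_num) hD0, div_le_iff₀ hD0]
  constructor <;> nlinarith

lemma sq_norm_add_le_two_mul {E : Type*} [SeminormedAddCommGroup E] (a b : E) :
    ‖a + b‖ ^ 2 ≤ 2 * (‖a‖ ^ 2 + ‖b‖ ^ 2) :=
  calc ‖a + b‖ ^ 2 ≤ (‖a‖ + ‖b‖) ^ 2 := by gcongr; exact norm_add_le a b
    _ ≤ 2 * (‖a‖ ^ 2 + ‖b‖ ^ 2) := add_sq_le

namespace Complex

lemma sq_norm_add_le_sq_norm_add_of_abs_im_le_re {a b : ℂ}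
    (ha : |a.im| ≤ a.re) (hb : |b.im| ≤ b.re) :
    ‖a‖ ^ 2 + ‖b‖ ^ 2 ≤ ‖a + b‖ ^ 2 := by
  have hcross : 0 ≤ (a * conj b).re := by
    simp only [mul_re, conj_re, conj_im]
    nlinarith [neg_abs_le (a.im * b.im), abs_mul a.im b.im,
      mul_le_mul ha hb (abs_nonneg _) ((abs_nonneg _).trans ha)]
  simp only [Complex.sq_norm, normSq_add]
  linarith

lemma abs_im_cpow_inv_two_le_re {x : ℂ} (hx : 0 ≤ x.re) :
    |(x ^ (2⁻¹ : ℂ)).im| ≤ (x ^ (2⁻¹ : ℂ)).re := by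
  rw [abs_cpow_inv_two_im, cpow_inv_two_re]
  gcongr
  linarith

lemma sq_norm_cpow_inv_two (x : ℂ) : ‖x ^ (2⁻¹ : ℂ)‖ ^ 2 = ‖x‖ := by
  rw [← norm_pow, cpow_ofNat_inv_pow]

lemma sq_norm_cpow_inv_two_add_mem_Icc {x y : ℂ} (hx : 0 ≤ x.re) (hy : 0 ≤ y.re) :
    ‖x‖ + ‖y‖ ≤ ‖x ^ (2⁻¹ : ℂ) + y ^ (2⁻¹ : ℂ)‖ ^ 2 ∧
      ‖x ^ (2⁻¹ : ℂ) + y ^ (2⁻¹ : ℂ)‖ ^ 2 ≤ 2 * (‖x‖ + ‖y‖) := by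
  simp only [← sq_norm_cpow_inv_two x, ← sq_norm_cpow_inv_two y]
  exact ⟨sq_norm_add_le_sq_norm_add_of_abs_im_le_re (abs_im_cpow_inv_two_le_re hx)
    (abs_im_cpow_inv_two_le_re hy), sq_norm_add_le_two_mul _ _⟩

lemma re_one_sub_nonneg {z : ℂ} (hz : ‖z‖ ≤ 1) : 0 ≤ (1 - z).re := by
  simpa using (re_le_norm z).trans hz

end Complex

lemma norm_u (z w : ℂ) :
    ‖u z w‖ = ‖1 - z‖ * ‖1 - w‖ / ‖(1 - z) ^ (2⁻¹ : ℂ) + (1 - w) ^ (2⁻¹ : ℂ)‖ ^ 2 := by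
  simp only [u, one_div, norm_div, norm_mul, norm_pow]

/-- `|u(z,w)| ≍ min(|1-z|, |1-w|)` on the bidisc. -/
theorem stmt_2 : ∃ c₁ : ℝ, 0 < c₁ ∧ ∃ c₂ : ℝ, 0 < c₂ ∧
    ∀ z ∈ ball (0:ℂ) 1, ∀ w ∈ ball (0:ℂ) 1,
      c₁ * min ‖1 - z‖ ‖1 - w‖ ≤ ‖u z w‖ ∧ ‖u z w‖ ≤ c₂ * min ‖1 - z‖ ‖1 - w‖ := by
  refine ⟨1 / 4, by norm_num, 1, one_pos, fun z hz w hw => ?_⟩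
  rw [mem_ball_zero_iff] at hz hw
  obtain ⟨hlow, hupp⟩ := sq_norm_cpow_inv_two_add_mem_Icc
    (re_one_sub_nonneg hz.le) (re_one_sub_nonneg hw.le)
  obtain ⟨h₁, h₂⟩ := min_div_four_le_mul_div_and_mul_div_le_min
    (norm_nonneg _) (norm_nonneg _) hlow hupp
  rw [norm_u]
  constructor <;> linarith
end

section
/- Let u(z,w) = (1−z)(1−w)/((1−z)^{1/2}+(1−w)^{1/2})² for z, w in the open unit disc D (principal square roots). Then for all (z,w) ∈ D², |1 − u(z,w)| ≤ 1; equivalently Re(u(z,w)) ≥ |u(z,w)|²/2. -/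
/-!
Write `a = 1 - z`, `b = 1 - w` and `s = a^{1/2}`, `t = b^{1/2}`. The disc condition gives
`Re (1/a) > 1/2` and `Re (1/b) > 1/2`, and since `Re a, Re b > 0` the principal roots `s, t` lie in
the sector `|Im| < Re`, so `Re (s t) > 0`. Hence
`1/u = (1/s + 1/t)² = 1/a + 1/b + 2/(s t)` has real part `> 1`, and `Re (1/u) ≥ 1/2` is exactly
`|u|² ≤ 2 Re u`, i.e. `|1 - u| ≤ 1`.
-/

open Metric Complex

namespace Complex

theorem norm_one_sub_le_one_iff (ζ : ℂ) : ‖1 - ζ‖ ≤ 1 ↔ ‖ζ‖ ^ 2 / 2 ≤ ζ.re := by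
  have h : ‖1 - ζ‖ ^ 2 = 1 - 2 * ζ.re + ‖ζ‖ ^ 2 := by
    simp only [Complex.sq_norm, normSq_apply, sub_re, sub_im, one_re, one_im]
    ring
  rw [← sq_le_one_iff₀ (norm_nonneg _), h]
  constructor <;> intro <;> linarith

theorem sq_norm_div_two_le_re_of_half_le_re_inv {ζ : ℂ} (h : 1 / 2 ≤ (ζ⁻¹).re) :
    ‖ζ‖ ^ 2 / 2 ≤ ζ.re := by
  rcases eq_or_ne ζ 0 with rfl | hζ
  · simp
  rw [inv_re, le_div_iff₀ (normSq_pos.2 hζ)] at h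
  rw [Complex.sq_norm]
  linarith

theorem re_one_sub_pos {z : ℂ} (hz : ‖z‖ < 1) : 0 < (1 - z).re := by
  rw [sub_re, one_re]
  linarith [re_le_norm z]

theorem half_lt_re_inv_one_sub {z : ℂ} (hz : ‖z‖ < 1) : 1 / 2 < ((1 - z)⁻¹).re := by
  have hz2 : normSq z < 1 := by
    rw [← Complex.sq_norm]
    exact pow_lt_one₀ (norm_nonneg z) hz two_ne_zero
  have hnormSq : normSq (1 - z) < 2 * (1 - z).re := by
    simp only [normSq_apply, sub_re, sub_im, one_re, one_im] at hz2 ⊢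
    linarith
  have hpos : 0 < normSq (1 - z) := by
    refine normSq_pos.2 (sub_ne_zero.2 ?_)
    rintro rfl
    simp at hz
  rw [inv_re, lt_div_iff₀ hpos]
  linarith

theorem cpow_one_div_two_sq (a : ℂ) : (a ^ (1 / 2 : ℂ)) ^ 2 = a := by
  rw [one_div]
  exact_mod_cast cpow_nat_inv_pow a two_ne_zero

theorem abs_im_lt_re_cpow_one_div_two {a : ℂ} (ha : 0 < a.re) :
    |(a ^ (1 / 2 : ℂ)).im| < (a ^ (1 / 2 : ℂ)).re := by
  rw [one_div, abs_cpow_inv_two_im, cpow_inv_two_re]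
  gcongr
  · linarith [re_le_norm a]
  · linarith

theorem re_mul_pos_of_abs_im_lt_re {s t : ℂ} (hs : |s.im| < s.re) (ht : |t.im| < t.re) :
    0 < (s * t).re := by
  have h : |s.im| * |t.im| < s.re * t.re :=
    mul_lt_mul'' hs ht (abs_nonneg _) (abs_nonneg _)
  rw [mul_re]
  linarith [le_abs_self (s.im * t.im), abs_mul s.im t.im]

end Complex

theorem inv_sq_mul_sq_div_add_sq {K : Type*} [Field K] {s t : K} (hs : s ≠ 0) (ht : t ≠ 0) :
    (s ^ 2 * t ^ 2 / (s + t) ^ 2)⁻¹ = (s⁻¹ + t⁻¹) ^ 2 := by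
  rw [inv_div, inv_add_inv hs ht, div_pow, mul_pow]

/-- The image of `u` lies in `{ζ : |1-ζ| ≤ 1} = {ζ : Re ζ ≥ |ζ|²/2}`. -/
theorem stmt_4 : ∀ z ∈ ball (0:ℂ) 1, ∀ w ∈ ball (0:ℂ) 1,
    ‖1 - u z w‖ ≤ 1 ∧ ‖u z w‖ ^ 2 / 2 ≤ (u z w).re := by
  intro z hz w hw
  rw [mem_ball_zero_iff] at hz hw
  set s := (1 - z) ^ ((1:ℂ)/2)
  set t := (1 - w) ^ ((1:ℂ)/2)
  have hs : |s.im| < s.re := abs_im_lt_re_cpow_one_div_two (re_one_sub_pos hz)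
  have ht : |t.im| < t.re := abs_im_lt_re_cpow_one_div_two (re_one_sub_pos hw)
  have hs0 : s ≠ 0 := fun h => by simp [h] at hs
  have ht0 : t ≠ 0 := fun h => by simp [h] at ht
  have hs2 : s ^ 2 = 1 - z := cpow_one_div_two_sq _
  have ht2 : t ^ 2 = 1 - w := cpow_one_div_two_sq _
  have hu : (u z w)⁻¹ = (s⁻¹ + t⁻¹) ^ 2 := by
    rw [← inv_sq_mul_sq_div_add_sq hs0 ht0, hs2, ht2]
    rfl
  have hre : 1 / 2 ≤ ((u z w)⁻¹).re := by
    have hst : 0 ≤ ((s * t)⁻¹).re := by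
      rw [inv_re]
      exact div_nonneg (re_mul_pos_of_abs_im_lt_re hs ht).le (normSq_nonneg _)
    have hexpand : (s⁻¹ + t⁻¹) ^ 2 = (1 - z)⁻¹ + (1 - w)⁻¹ + 2 * (s * t)⁻¹ := by
      rw [← hs2, ← ht2]
      ring
    simp only [hu, hexpand, add_re, mul_re, re_ofNat, im_ofNat, zero_mul, sub_zero]
    linarith [half_lt_re_inv_one_sub hz, half_lt_re_inv_one_sub hw]
  have h := sq_norm_div_two_le_re_of_half_le_re_inv hre
  exact ⟨(norm_one_sub_le_one_iff _).2 h, h⟩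
end

section
/- Let α, β > 0 and let f(z,w) = Σ_{n,m∈ℤ} a_{n,m} z^n w^m be a function on the torus T² with Σ |a_{n,m}|(1+|n|)^α(1+|m|)^β ≤ 1. For 0 < ρ < 1 define f_ρ(z,w) = Σ a_{n,m} ρ^{|n|+|m|} z^n w^m. Then for all z, w on the unit circle T, |f(z,w) − f_ρ(z,w)| ≤ 2(1−ρ)^γ, where γ = min(1, α, β). -/
/-!
Each coefficient is damped by the factor `1 - ρ^k`, `k = |n| + |m|`, which is at most
`min (1, k (1 - ρ)) ≤ (k (1 - ρ))^γ` because `γ ≤ 1`. Since `k ≤ (1 + |n|)(1 + |m|)` and `γ ≤ α, β`,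
`k^γ` is dominated by the Beurling weight, so each term of `f - f_ρ` is at most `(1 - ρ)^γ` times
the corresponding weighted coefficient, and summing gives the bound.
-/

open Real

lemma one_sub_pow_le_natCast_mul {ρ : ℝ} (hρ : -1 ≤ ρ) (k : ℕ) : 1 - ρ ^ k ≤ k * (1 - ρ) := by
  have bernoulli := one_add_mul_le_pow (a := ρ - 1) (by linarith) k
  rw [add_sub_cancel] at bernoulli
  linarith

lemma min_one_le_rpow {x γ : ℝ} (hx : 0 ≤ x) (hγ0 : 0 ≤ γ) (hγ1 : γ ≤ 1) : min 1 x ≤ x ^ γ := by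
  rcases le_total 1 x with h | h
  · exact (min_le_left _ _).trans (one_le_rpow h hγ0)
  · exact (min_le_right _ _).trans (self_le_rpow_of_le_one hx h hγ1)

lemma one_sub_pow_le_rpow_mul_rpow {ρ γ : ℝ} (hρ0 : 0 ≤ ρ) (hρ1 : ρ ≤ 1) (hγ0 : 0 ≤ γ)
    (hγ1 : γ ≤ 1) (k : ℕ) : 1 - ρ ^ k ≤ (k : ℝ) ^ γ * (1 - ρ) ^ γ := by
  rw [← mul_rpow k.cast_nonneg (sub_nonneg.2 hρ1)]
  refine le_trans ?_ (min_one_le_rpow (by positivity) hγ0 hγ1)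
  exact le_min (by linarith [pow_nonneg hρ0 k]) (one_sub_pow_le_natCast_mul (by linarith) k)

lemma add_rpow_le_one_add_rpow_mul_one_add_rpow {s t α β γ : ℝ} (hs : 0 ≤ s) (ht : 0 ≤ t)
    (hγ0 : 0 ≤ γ) (hγα : γ ≤ α) (hγβ : γ ≤ β) :
    (s + t) ^ γ ≤ (1 + s) ^ α * (1 + t) ^ β :=
  calc (s + t) ^ γ ≤ ((1 + s) * (1 + t)) ^ γ := by gcongr; nlinarith
    _ = (1 + s) ^ γ * (1 + t) ^ γ := mul_rpow (by positivity) (by positivity)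
    _ ≤ (1 + s) ^ α * (1 + t) ^ β := by gcongr <;> linarith

lemma one_sub_pow_natAbs_add_natAbs_le {ρ α β γ : ℝ} (hρ0 : 0 ≤ ρ) (hρ1 : ρ ≤ 1) (hγ0 : 0 ≤ γ)
    (hγ1 : γ ≤ 1) (hγα : γ ≤ α) (hγβ : γ ≤ β) (n m : ℤ) :
    1 - ρ ^ (n.natAbs + m.natAbs) ≤ (1 - ρ) ^ γ * ((1 + |n| : ℝ) ^ α * (1 + |m| : ℝ) ^ β) := by
  have hweight := add_rpow_le_one_add_rpow_mul_one_add_rpow (s := (|n| : ℝ)) (t := (|m| : ℝ))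
    (by positivity) (by positivity) hγ0 hγα hγβ
  calc 1 - ρ ^ (n.natAbs + m.natAbs)
      ≤ ((n.natAbs + m.natAbs : ℕ) : ℝ) ^ γ * (1 - ρ) ^ γ :=
        one_sub_pow_le_rpow_mul_rpow hρ0 hρ1 hγ0 hγ1 _
    _ ≤ ((1 + |n| : ℝ) ^ α * (1 + |m| : ℝ) ^ β) * (1 - ρ) ^ γ := by
        push_cast [Nat.cast_natAbs]
        gcongr
    _ = (1 - ρ) ^ γ * ((1 + |n| : ℝ) ^ α * (1 + |m| : ℝ) ^ β) := mul_comm _ _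

lemma norm_tsum_sub_tsum_le_mul_tsum {ι E : Type*} [NormedAddCommGroup E] [CompleteSpace E]
    {f g : ι → E} {B : ι → ℝ} (hB : Summable B) (hf : ∀ i, ‖f i‖ ≤ B i) (hg : ∀ i, ‖g i‖ ≤ B i)
    {c : ℝ} (hfg : ∀ i, ‖f i - g i‖ ≤ c * B i) :
    ‖∑' i, f i - ∑' i, g i‖ ≤ c * ∑' i, B i := by
  rw [← (hB.of_norm_bounded hf).tsum_sub (hB.of_norm_bounded hg), ← tsum_mul_left]
  exact tsum_of_norm_bounded (hB.mul_left c).hasSum hfg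

lemma norm_mul_zpow_mul_zpow_of_norm_eq_one {z w : ℂ} (hz : ‖z‖ = 1) (hw : ‖w‖ = 1) (c : ℂ)
    (n m : ℤ) : ‖c * z ^ n * w ^ m‖ = ‖c‖ := by
  simp [hz, hw]

lemma ofReal_zpow_abs_add_abs (ρ : ℝ) (n m : ℤ) :
    (ρ : ℂ) ^ (|n| + |m|) = ((ρ ^ (n.natAbs + m.natAbs) : ℝ) : ℂ) := by
  rw [← Int.natCast_natAbs, ← Int.natCast_natAbs, ← Nat.cast_add, zpow_natCast]
  push_cast
  rfl

lemma le_mul_one_add_rpow_mul_one_add_rpow {x α β : ℝ} (hx : 0 ≤ x) (hα : 0 ≤ α) (hβ : 0 ≤ β)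
    (n m : ℤ) : x ≤ x * (1 + |n| : ℝ) ^ α * (1 + |m| : ℝ) ^ β := by
  have hn : 1 ≤ (1 + |n| : ℝ) ^ α := one_le_rpow (by simp) hα
  have hm : 1 ≤ (1 + |m| : ℝ) ^ β := one_le_rpow (by simp) hβ
  rw [mul_assoc]
  exact le_mul_of_one_le_right hx (one_le_mul_of_one_le_of_one_le hn hm)

lemma norm_mul_ofReal_zpow_abs_add_abs_mul_zpow_le {z w : ℂ} (hz : ‖z‖ = 1) (hw : ‖w‖ = 1)
    {ρ : ℝ} (hρ0 : 0 ≤ ρ) (hρ1 : ρ ≤ 1) (c : ℂ) (n m : ℤ) :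
    ‖c * (ρ : ℂ) ^ (|n| + |m|) * z ^ n * w ^ m‖ ≤ ‖c‖ := by
  rw [norm_mul_zpow_mul_zpow_of_norm_eq_one hz hw, norm_mul, ofReal_zpow_abs_add_abs,
    Complex.norm_real, norm_of_nonneg (pow_nonneg hρ0 _)]
  exact mul_le_of_le_one_right (norm_nonneg _) (pow_le_one₀ hρ0 hρ1)

lemma norm_sub_mul_ofReal_zpow_abs_add_abs {z w : ℂ} (hz : ‖z‖ = 1) (hw : ‖w‖ = 1)
    {ρ : ℝ} (hρ0 : 0 ≤ ρ) (hρ1 : ρ ≤ 1) (c : ℂ) (n m : ℤ) :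
    ‖c * z ^ n * w ^ m - c * (ρ : ℂ) ^ (|n| + |m|) * z ^ n * w ^ m‖ =
      ‖c‖ * (1 - ρ ^ (n.natAbs + m.natAbs)) := by
  have hfactor : c * z ^ n * w ^ m - c * (ρ : ℂ) ^ (|n| + |m|) * z ^ n * w ^ m
      = c * ((1 - ρ ^ (n.natAbs + m.natAbs) : ℝ) : ℂ) * z ^ n * w ^ m := by
    rw [ofReal_zpow_abs_add_abs]; push_cast; ring
  rw [hfactor, norm_mul_zpow_mul_zpow_of_norm_eq_one hz hw, norm_mul, Complex.norm_real,
    norm_of_nonneg (sub_nonneg.2 (pow_le_one₀ hρ0 hρ1))]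

/-- Approximation of a Beurling-algebra function on the 2-torus by its Abel means:
`|f(z,w) - f_ρ(z,w)| ≤ 2 (1-ρ)^γ` with `γ = min(1, α, β)`. -/
theorem stmt_6 (α β : ℝ) (hα : 0 < α) (hβ : 0 < β) (a : ℤ × ℤ → ℂ)
    (hsum : Summable (fun p : ℤ × ℤ =>
      ‖a p‖ * (1 + |p.1| : ℝ) ^ α * (1 + |p.2| : ℝ) ^ β))
    (hnorm : ∑' p : ℤ × ℤ,
      ‖a p‖ * (1 + |p.1| : ℝ) ^ α * (1 + |p.2| : ℝ) ^ β ≤ 1)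
    (ρ : ℝ) (hρ0 : 0 < ρ) (hρ1 : ρ < 1) :
    ∀ z w : ℂ, ‖z‖ = 1 → ‖w‖ = 1 →
      ‖(∑' p : ℤ × ℤ, a p * z ^ p.1 * w ^ p.2) -
        ∑' p : ℤ × ℤ, a p * (ρ : ℂ) ^ (|p.1| + |p.2|) * z ^ p.1 * w ^ p.2‖ ≤
        2 * (1 - ρ) ^ (min 1 (min α β)) := by
  intro z w hz hw
  set γ := min 1 (min α β)
  have hγ0 : 0 ≤ γ := le_min zero_le_one (le_min hα.le hβ.le)
  have hγα : γ ≤ α := (min_le_right _ _).trans (min_le_left _ _)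
  have hγβ : γ ≤ β := (min_le_right _ _).trans (min_le_right _ _)
  have hcoeff (p : ℤ × ℤ) :=
    le_mul_one_add_rpow_mul_one_add_rpow (norm_nonneg (a p)) hα.le hβ.le p.1 p.2
  refine (norm_tsum_sub_tsum_le_mul_tsum (c := (1 - ρ) ^ γ) hsum
    (fun p => ?_) (fun p => ?_) (fun p => ?_)).trans ?_
  · exact (norm_mul_zpow_mul_zpow_of_norm_eq_one hz hw _ _ _).trans_le (hcoeff p)
  · exact (norm_mul_ofReal_zpow_abs_add_abs_mul_zpow_le hz hw hρ0.le hρ1.le _ _ _).trans (hcoeff p)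
  · rw [norm_sub_mul_ofReal_zpow_abs_add_abs hz hw hρ0.le hρ1.le]
    calc ‖a p‖ * (1 - ρ ^ (p.1.natAbs + p.2.natAbs))
        ≤ ‖a p‖ * ((1 - ρ) ^ γ * ((1 + |p.1| : ℝ) ^ α * (1 + |p.2| : ℝ) ^ β)) := by
          gcongr
          exact one_sub_pow_natAbs_add_natAbs_le hρ0.le hρ1.le hγ0 (min_le_left _ _) hγα hγβ _ _
      _ = (1 - ρ) ^ γ * (‖a p‖ * (1 + |p.1| : ℝ) ^ α * (1 + |p.2| : ℝ) ^ β) := by ring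
  · have hpos : 0 ≤ (1 - ρ) ^ γ := rpow_nonneg (sub_nonneg.2 hρ1.le) γ
    nlinarith
end

section
/- Let a : ℤ × ℤ → ℂ with Σ_{n,m} |a_{n,m}| < ∞ and sup bound S := sup_{n,m} (1−ρ^{|n|+|m|})/((1+|n|)^α(1+|m|)^β) where α, β > 0 and 0 < ρ < 1. Let g(z,w) = Σ a_{n,m}(1−ρ^{|n|+|m|}) z^n w^m on T² and suppose ‖Σ a_{n,m} z^n w^m‖_{α,β} ≤ 1. Then for every integer p ≥ 2, ‖g^p‖_{α,β} ≤ p^{α+β} S^{p−2}. -/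
/-!
Expanding the iterated convolution, `‖g^p‖_{α,β}` is at most a sum over `p`-tuples
`(q₁, …, qₚ)` of `∏ |a_{qᵢ}| (1 - ρ^{|qᵢ|})` times the weight of `q₁ + ⋯ + qₚ`. If `|n_K|` is the
largest of the first coordinates and `|m_J|` the largest of the second ones, then
`(1 + |n₁ + ⋯ + nₚ|)^α (1 + |m₁ + ⋯ + mₚ|)^β ≤ p^{α+β} (1 + |n_K|)^α (1 + |m_J|)^β`, so the
damping factors at `K` and `J` are bounded by `1` and each of the other `p - 2` by `S` times the
weight of `qᵢ`. The sum then factors as `p^{α+β} S^{p-2} ‖a‖_{α,β}^p`. All series are summed in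
`ℝ≥0∞`, where no summability has to be tracked.
-/

noncomputable def conv (c d : ℤ × ℤ → ℂ) : ℤ × ℤ → ℂ :=
  fun p => ∑' q : ℤ × ℤ, c q * d (p - q)

open Finset
open scoped ENNReal

namespace ENNReal

variable {α : Type*}

lemma tsum_fin_succ_pi {n : ℕ} (f : (Fin (n + 1) → α) → ℝ≥0∞) :
    ∑' g, f g = ∑' x, ∑' g : Fin n → α, f (Fin.cons x g) := by
  rw [← (Fin.consEquiv fun _ => α).tsum_eq]
  exact ENNReal.tsum_prod' (f := fun p : α × (Fin n → α) => f (Fin.cons p.1 p.2))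

lemma tsum_pi_prod (h : α → ℝ≥0∞) (n : ℕ) :
    ∑' g : Fin n → α, ∏ i, h (g i) = (∑' x, h x) ^ n := by
  induction n with
  | zero => simp
  | succ n ih =>
    simp_rw [tsum_fin_succ_pi, Fin.prod_univ_succ, Fin.cons_zero, Fin.cons_succ,
      ENNReal.tsum_mul_left, ih, ENNReal.tsum_mul_right, pow_succ']

end ENNReal

section Convolution

variable {G : Type*} [AddCommGroup G]

noncomputable def convENNReal (c d : G → ℝ≥0∞) : G → ℝ≥0∞ :=
  fun q => ∑' r, c r * d (q - r)

lemma tsum_convENNReal_iterate_mul (B : G → ℝ≥0∞) (k : ℕ) (W : G → ℝ≥0∞) :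
    ∑' q, (convENNReal B)^[k] B q * W q
      = ∑' g : Fin (k + 1) → G, (∏ i, B (g i)) * W (∑ i, g i) := by
  induction k generalizing W with
  | zero =>
    rw [← (Equiv.funUnique (Fin 1) G).symm.tsum_eq]
    simp
  | succ k ih =>
    calc ∑' q, (convENNReal B)^[k + 1] B q * W q
        = ∑' r, B r * ∑' q, (convENNReal B)^[k] B (q - r) * W q := by
          simp_rw [Function.iterate_succ_apply', convENNReal, ← ENNReal.tsum_mul_right,
            ← ENNReal.tsum_mul_left, mul_assoc]
          exact ENNReal.tsum_comm
      _ = ∑' r, B r * ∑' s, (convENNReal B)^[k] B s * W (s + r) := by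
          congr! 2 with r
          rw [← (Equiv.addRight r).tsum_eq]
          simp
      _ = ∑' g : Fin (k + 2) → G, (∏ i, B (g i)) * W (∑ i, g i) := by
          rw [ENNReal.tsum_fin_succ_pi]
          refine tsum_congr fun r => ?_
          rw [ih, ← ENNReal.tsum_mul_left]
          refine tsum_congr fun g => ?_
          simp only [Fin.prod_univ_succ (n := k + 1), Fin.sum_univ_succ (n := k + 1),
            Fin.cons_zero, Fin.cons_succ, mul_assoc, add_comm r]

end Convolution

lemma enorm_conv_iterate_le (b : ℤ × ℤ → ℂ) (k : ℕ) (q : ℤ × ℤ) :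
    ‖(conv b)^[k] b q‖ₑ ≤ (convENNReal fun r => ‖b r‖ₑ)^[k] (fun r => ‖b r‖ₑ) q := by
  induction k generalizing q with
  | zero => rfl
  | succ k ih =>
    simp only [Function.iterate_succ_apply']
    refine enorm_tsum_le_tsum_enorm.trans (ENNReal.tsum_le_tsum fun r => ?_)
    rw [enorm_mul]
    gcongr
    exact ih _

lemma prod_mul_le_pow_card_sub_two_mul_prod {ι : Type*} [Fintype ι] [DecidableEq ι]
    {t u v : ι → ℝ≥0∞} {S : ℝ≥0∞} (hS : S ≤ 1) (ht : ∀ i, t i ≤ 1)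
    (htS : ∀ i, t i ≤ S * (u i * v i)) (hu : ∀ i, 1 ≤ u i) (hv : ∀ i, 1 ≤ v i) (K J : ι) :
    (∏ i, t i) * (u K * v J) ≤ S ^ (Fintype.card ι - 2) * ∏ i, u i * v i := by
  set s : Finset ι := {K, J}
  have hcompl : ∏ i ∈ sᶜ, t i ≤ S ^ (Fintype.card ι - 2) * ∏ i ∈ sᶜ, u i * v i :=
    calc ∏ i ∈ sᶜ, t i ≤ ∏ i ∈ sᶜ, S * (u i * v i) := prod_le_prod' fun i _ => htS i
      _ = S ^ #sᶜ * ∏ i ∈ sᶜ, u i * v i := by rw [prod_mul_distrib, prod_const]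
      _ ≤ S ^ (Fintype.card ι - 2) * ∏ i ∈ sᶜ, u i * v i := by
        have hcard : Fintype.card ι - 2 ≤ #sᶜ := by
          rw [card_compl]
          have : #s ≤ 2 := card_le_two
          omega
        gcongr ?_ * _
        exact pow_le_pow_right_of_le_one' hS hcard
  have hpair : u K * v J ≤ ∏ i ∈ s, u i * v i := by
    rw [prod_mul_distrib]
    exact mul_le_mul' (single_le_prod' (fun i _ => hu i) (by simp [s]))
      (single_le_prod' (fun i _ => hv i) (by simp [s]))
  calc (∏ i, t i) * (u K * v J) = (∏ i ∈ s, t i) * (∏ i ∈ sᶜ, t i) * (u K * v J) := by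
        rw [prod_mul_prod_compl]
    _ ≤ 1 * (S ^ (Fintype.card ι - 2) * ∏ i ∈ sᶜ, u i * v i) * ∏ i ∈ s, u i * v i := by
        gcongr
        exact prod_le_one' fun i _ => ht i
    _ = S ^ (Fintype.card ι - 2) * ∏ i, u i * v i := by
        rw [← prod_mul_prod_compl s]
        ring

lemma exists_one_add_abs_sum_le {ι R : Type*} [Fintype ι] [Nonempty ι] [Ring R] [LinearOrder R]
    [IsStrictOrderedRing R] (x : ι → R) :
    ∃ K, 1 + |∑ i, x i| ≤ Fintype.card ι * (1 + |x K|) := by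
  obtain ⟨K, -, hK⟩ := exists_max_image univ (fun i => |x i|) univ_nonempty
  refine ⟨K, ?_⟩
  have hsum : |∑ i, x i| ≤ Fintype.card ι * |x K| :=
    calc |∑ i, x i| ≤ ∑ i, |x i| := abs_sum_le_sum_abs _ _
      _ ≤ ∑ _i : ι, |x K| := sum_le_sum fun i _ => hK i (mem_univ i)
      _ = Fintype.card ι * |x K| := by simp
  have hcard : (1 : R) ≤ Fintype.card ι := by exact_mod_cast Fintype.card_pos
  rw [mul_one_add]
  exact add_le_add hcard hsum

lemma exists_one_add_abs_sum_rpow_le {ι : Type*} [Fintype ι] [Nonempty ι] {α : ℝ} (hα : 0 ≤ α)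
    (x : ι → ℤ) :
    ∃ K, (1 + |∑ i, x i| : ℝ) ^ α ≤ (Fintype.card ι : ℝ) ^ α * (1 + |x K| : ℝ) ^ α := by
  obtain ⟨K, hK⟩ := exists_one_add_abs_sum_le x
  refine ⟨K, ?_⟩
  rw [← Real.mul_rpow (by positivity) (by positivity)]
  exact Real.rpow_le_rpow (by positivity) (by exact_mod_cast hK) hα

noncomputable def weight (α β : ℝ) (q : ℤ × ℤ) : ℝ := (1 + |q.1| : ℝ) ^ α * (1 + |q.2| : ℝ) ^ β

noncomputable def damping (ρ : ℝ) (q : ℤ × ℤ) : ℝ := 1 - ρ ^ (|q.1| + |q.2|)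

noncomputable def dampingSup (α β ρ : ℝ) : ℝ := ⨆ q : ℤ × ℤ, damping ρ q / weight α β q

section WeightedNorm

variable {α β ρ : ℝ}

lemma one_le_weight (hα : 0 ≤ α) (hβ : 0 ≤ β) (q : ℤ × ℤ) : 1 ≤ weight α β q :=
  one_le_mul_of_one_le_of_one_le (Real.one_le_rpow (by simp) hα) (Real.one_le_rpow (by simp) hβ)

lemma weight_pos (α β : ℝ) (q : ℤ × ℤ) : 0 < weight α β q := by
  unfold weight
  positivity

lemma damping_nonneg (hρ0 : 0 < ρ) (hρ1 : ρ ≤ 1) (q : ℤ × ℤ) : 0 ≤ damping ρ q :=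
  sub_nonneg.2 (zpow_le_one₀ hρ0 hρ1 (by positivity))

lemma damping_le_one (hρ : 0 ≤ ρ) (q : ℤ × ℤ) : damping ρ q ≤ 1 :=
  sub_le_self _ (zpow_nonneg hρ _)

lemma damping_div_weight_le_one (hα : 0 ≤ α) (hβ : 0 ≤ β) (hρ : 0 ≤ ρ) (q : ℤ × ℤ) :
    damping ρ q / weight α β q ≤ 1 :=
  div_le_one_of_le₀ ((damping_le_one hρ q).trans (one_le_weight hα hβ q))
    (weight_pos α β q).le

lemma dampingSup_nonneg (hρ0 : 0 < ρ) (hρ1 : ρ ≤ 1) :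
    0 ≤ dampingSup α β ρ :=
  Real.iSup_nonneg fun q => div_nonneg (damping_nonneg hρ0 hρ1 q) (weight_pos α β q).le

lemma dampingSup_le_one (hα : 0 ≤ α) (hβ : 0 ≤ β) (hρ : 0 ≤ ρ) : dampingSup α β ρ ≤ 1 :=
  ciSup_le (damping_div_weight_le_one hα hβ hρ)

lemma damping_le_dampingSup_mul_weight (hα : 0 ≤ α) (hβ : 0 ≤ β) (hρ : 0 ≤ ρ) (q : ℤ × ℤ) :
    damping ρ q ≤ dampingSup α β ρ * weight α β q :=
  (div_le_iff₀ (weight_pos α β q)).1 <|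
    le_ciSup ⟨1, Set.forall_mem_range.2 (damping_div_weight_le_one hα hβ hρ)⟩ q

lemma exists_weight_sum_le {ι : Type*} [Fintype ι] [Nonempty ι] (hα : 0 ≤ α) (hβ : 0 ≤ β)
    (g : ι → ℤ × ℤ) :
    ∃ K J, weight α β (∑ i, g i) ≤
      (Fintype.card ι : ℝ) ^ (α + β) * ((1 + |(g K).1| : ℝ) ^ α * (1 + |(g J).2| : ℝ) ^ β) := by
  obtain ⟨K, hK⟩ := exists_one_add_abs_sum_rpow_le hα fun i => (g i).1
  obtain ⟨J, hJ⟩ := exists_one_add_abs_sum_rpow_le hβ fun i => (g i).2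
  refine ⟨K, J, ?_⟩
  calc weight α β (∑ i, g i)
      ≤ ((Fintype.card ι : ℝ) ^ α * (1 + |(g K).1| : ℝ) ^ α) *
          ((Fintype.card ι : ℝ) ^ β * (1 + |(g J).2| : ℝ) ^ β) := by
        simp only [weight, Prod.fst_sum, Prod.snd_sum]
        exact mul_le_mul hK hJ (by positivity) (by positivity)
    _ = _ := by
        rw [Real.rpow_add (by exact_mod_cast Fintype.card_pos)]
        ring

lemma prod_damping_mul_weight_sum_le {ι : Type*} [Fintype ι] [Nonempty ι]
    (hα : 0 ≤ α) (hβ : 0 ≤ β) (hρ0 : 0 < ρ) (hρ1 : ρ ≤ 1) (g : ι → ℤ × ℤ) :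
    (∏ i, ENNReal.ofReal (damping ρ (g i))) * ENNReal.ofReal (weight α β (∑ i, g i)) ≤
      ENNReal.ofReal ((Fintype.card ι : ℝ) ^ (α + β)) *
        ENNReal.ofReal (dampingSup α β ρ) ^ (Fintype.card ι - 2) *
          ∏ i, ENNReal.ofReal (weight α β (g i)) := by
  classical
  set u : ι → ℝ≥0∞ := fun i => ENNReal.ofReal ((1 + |(g i).1| : ℝ) ^ α)
  set v : ι → ℝ≥0∞ := fun i => ENNReal.ofReal ((1 + |(g i).2| : ℝ) ^ β)
  have hweight : ∀ i, ENNReal.ofReal (weight α β (g i)) = u i * v i := fun i =>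
    ENNReal.ofReal_mul (by positivity)
  obtain ⟨K, J, hKJ⟩ := exists_weight_sum_le hα hβ g
  have hsubmul : ENNReal.ofReal (weight α β (∑ i, g i)) ≤
      ENNReal.ofReal ((Fintype.card ι : ℝ) ^ (α + β)) * (u K * v J) := by
    rw [← ENNReal.ofReal_mul (by positivity), ← ENNReal.ofReal_mul (by positivity)]
    exact ENNReal.ofReal_le_ofReal hKJ
  have hsplit := prod_mul_le_pow_card_sub_two_mul_prod
    (t := fun i => ENNReal.ofReal (damping ρ (g i)))
    (ENNReal.ofReal_le_one.2 (dampingSup_le_one hα hβ hρ0.le))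
    (fun i => ENNReal.ofReal_le_one.2 (damping_le_one hρ0.le _))
    (fun i => by
      rw [← hweight, ← ENNReal.ofReal_mul (dampingSup_nonneg hρ0 hρ1)]
      exact ENNReal.ofReal_le_ofReal (damping_le_dampingSup_mul_weight hα hβ hρ0.le _))
    (fun i => ENNReal.one_le_ofReal.2 (Real.one_le_rpow (by simp) hα))
    (fun i => ENNReal.one_le_ofReal.2 (Real.one_le_rpow (by simp) hβ)) K J
  simp_rw [hweight, mul_assoc]
  calc (∏ i, ENNReal.ofReal (damping ρ (g i))) * ENNReal.ofReal (weight α β (∑ i, g i))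
      ≤ ENNReal.ofReal ((Fintype.card ι : ℝ) ^ (α + β)) *
          ((∏ i, ENNReal.ofReal (damping ρ (g i))) * (u K * v J)) := by
        rw [mul_left_comm]
        gcongr
    _ ≤ _ := mul_le_mul_right hsplit _

lemma enorm_one_sub_zpow_eq_damping (hρ0 : 0 < ρ) (hρ1 : ρ ≤ 1) (q : ℤ × ℤ) :
    ‖1 - (ρ : ℂ) ^ (|q.1| + |q.2|)‖ₑ = ENNReal.ofReal (damping ρ q) := by
  rw [← Complex.ofReal_one, ← Complex.ofReal_zpow, ← Complex.ofReal_sub, ← ofReal_norm,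
    Complex.norm_real]
  exact congrArg ENNReal.ofReal (Real.norm_of_nonneg (damping_nonneg hρ0 hρ1 q))

noncomputable def weightedNorm (α β : ℝ) (c : ℤ × ℤ → ℂ) : ℝ≥0∞ :=
  ∑' q, ‖c q‖ₑ * ENNReal.ofReal (weight α β q)

lemma ofReal_norm_mul_weight (c : ℤ × ℤ → ℂ) (q : ℤ × ℤ) :
    ENNReal.ofReal (‖c q‖ * (1 + |q.1| : ℝ) ^ α * (1 + |q.2| : ℝ) ^ β)
      = ‖c q‖ₑ * ENNReal.ofReal (weight α β q) := by
  rw [mul_assoc, ENNReal.ofReal_mul (norm_nonneg _), ofReal_norm]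
  rfl

-- Both sides are `0` when the real series diverges.
lemma tsum_norm_mul_weight_eq_toReal (c : ℤ × ℤ → ℂ) :
    ∑' q, ‖c q‖ * (1 + |q.1| : ℝ) ^ α * (1 + |q.2| : ℝ) ^ β = (weightedNorm α β c).toReal := by
  rw [weightedNorm, ENNReal.tsum_toReal_eq fun q => ENNReal.mul_ne_top enorm_ne_top
    ENNReal.ofReal_ne_top]
  refine tsum_congr fun q => ?_
  rw [← ofReal_norm_mul_weight, ENNReal.toReal_ofReal (by positivity)]

lemma weightedNorm_eq_ofReal_tsum {c : ℤ × ℤ → ℂ}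
    (hc : Summable fun q : ℤ × ℤ => ‖c q‖ * (1 + |q.1| : ℝ) ^ α * (1 + |q.2| : ℝ) ^ β) :
    weightedNorm α β c
      = ENNReal.ofReal (∑' q, ‖c q‖ * (1 + |q.1| : ℝ) ^ α * (1 + |q.2| : ℝ) ^ β) := by
  rw [ENNReal.ofReal_tsum_of_nonneg (fun q => by positivity) hc]
  exact tsum_congr fun q => (ofReal_norm_mul_weight c q).symm

lemma weightedNorm_conv_iterate_le (hα : 0 ≤ α) (hβ : 0 ≤ β) (hρ0 : 0 < ρ) (hρ1 : ρ ≤ 1)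
    {a b : ℤ × ℤ → ℂ} (hb : ∀ q, ‖b q‖ₑ ≤ ‖a q‖ₑ * ENNReal.ofReal (damping ρ q)) (k : ℕ) :
    weightedNorm α β ((conv b)^[k + 1] b) ≤
      ENNReal.ofReal (((k + 2 : ℕ) : ℝ) ^ (α + β)) * ENNReal.ofReal (dampingSup α β ρ) ^ k *
        weightedNorm α β a ^ (k + 2) := by
  set B : ℤ × ℤ → ℝ≥0∞ := fun q => ‖b q‖ₑ
  set W : ℤ × ℤ → ℝ≥0∞ := fun q => ENNReal.ofReal (weight α β q)
  set C := ENNReal.ofReal (((k + 2 : ℕ) : ℝ) ^ (α + β)) * ENNReal.ofReal (dampingSup α β ρ) ^ k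
  have hpoint : ∀ g : Fin (k + 2) → ℤ × ℤ,
      (∏ i, B (g i)) * W (∑ i, g i) ≤ C * ∏ i, ‖a (g i)‖ₑ * W (g i) := fun g =>
    calc (∏ i, B (g i)) * W (∑ i, g i)
        ≤ (∏ i, ‖a (g i)‖ₑ * ENNReal.ofReal (damping ρ (g i))) * W (∑ i, g i) := by
          gcongr with i
          exact hb _
      _ = (∏ i, ‖a (g i)‖ₑ) * ((∏ i, ENNReal.ofReal (damping ρ (g i))) * W (∑ i, g i)) := by
          rw [prod_mul_distrib, mul_assoc]
      _ ≤ (∏ i, ‖a (g i)‖ₑ) * (C * ∏ i, W (g i)) := by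
          have hg := prod_damping_mul_weight_sum_le hα hβ hρ0 hρ1 g
          rw [Fintype.card_fin, Nat.add_sub_cancel] at hg
          exact mul_le_mul_right hg _
      _ = C * ∏ i, ‖a (g i)‖ₑ * W (g i) := by
          rw [prod_mul_distrib]
          ring
  calc weightedNorm α β ((conv b)^[k + 1] b)
      ≤ ∑' q, (convENNReal B)^[k + 1] B q * W q :=
        ENNReal.tsum_le_tsum fun q => by
          gcongr
          exact enorm_conv_iterate_le b (k + 1) q
    _ = ∑' g : Fin (k + 2) → ℤ × ℤ, (∏ i, B (g i)) * W (∑ i, g i) :=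
        tsum_convENNReal_iterate_mul B (k + 1) W
    _ ≤ ∑' g : Fin (k + 2) → ℤ × ℤ, C * ∏ i, ‖a (g i)‖ₑ * W (g i) := ENNReal.tsum_le_tsum hpoint
    _ = C * weightedNorm α β a ^ (k + 2) := by
        rw [ENNReal.tsum_mul_left, ENNReal.tsum_pi_prod fun q => ‖a q‖ₑ * W q]
        rfl

end WeightedNorm

/-- Norm estimate for powers of `g = Σ a_{n,m}(1-ρ^{|n|+|m|}) zⁿ wᵐ`:
`‖g^p‖_{α,β} ≤ p^{α+β} S^{p-2}` where `S` is the sup of the ratios. -/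
theorem stmt_8 (α β : ℝ) (hα : 0 < α) (hβ : 0 < β) (ρ : ℝ) (hρ0 : 0 < ρ) (hρ1 : ρ < 1)
    (a : ℤ × ℤ → ℂ)
    (hsum : Summable (fun p : ℤ × ℤ =>
      ‖a p‖ * (1 + |p.1| : ℝ) ^ α * (1 + |p.2| : ℝ) ^ β))
    (hnorm : ∑' p : ℤ × ℤ,
      ‖a p‖ * (1 + |p.1| : ℝ) ^ α * (1 + |p.2| : ℝ) ^ β ≤ 1)
    (p : ℕ) (hp : 2 ≤ p) :
    ∑' q : ℤ × ℤ,
        ‖((conv (fun q : ℤ × ℤ => a q * (1 - (ρ : ℂ) ^ (|q.1| + |q.2|))))^[p - 1]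
            (fun q : ℤ × ℤ => a q * (1 - (ρ : ℂ) ^ (|q.1| + |q.2|))) q)‖ *
          (1 + |q.1| : ℝ) ^ α * (1 + |q.2| : ℝ) ^ β ≤
      (p : ℝ) ^ (α + β) *
        (⨆ q : ℤ × ℤ, (1 - ρ ^ (|q.1| + |q.2|)) /
          ((1 + |q.1| : ℝ) ^ α * (1 + |q.2| : ℝ) ^ β)) ^ (p - 2) := by
  obtain ⟨k, rfl⟩ : ∃ k, p = k + 2 := ⟨p - 2, by omega⟩
  have ha : weightedNorm α β a ≤ 1 := by
    rw [weightedNorm_eq_ofReal_tsum hsum]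
    exact ENNReal.ofReal_le_one.2 hnorm
  have hb : ∀ q, ‖a q * (1 - (ρ : ℂ) ^ (|q.1| + |q.2|))‖ₑ ≤ ‖a q‖ₑ * ENNReal.ofReal (damping ρ q) :=
    fun q => by rw [enorm_mul, enorm_one_sub_zpow_eq_damping hρ0 hρ1.le]
  have hS : 0 ≤ dampingSup α β ρ := dampingSup_nonneg hρ0 hρ1.le
  rw [tsum_norm_mul_weight_eq_toReal, Nat.add_sub_cancel]
  refine ENNReal.toReal_le_of_le_ofReal (by positivity)
    ((weightedNorm_conv_iterate_le hα.le hβ.le hρ0 hρ1.le hb k).trans ?_)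
  calc _ ≤ ENNReal.ofReal (((k + 2 : ℕ) : ℝ) ^ (α + β)) * ENNReal.ofReal (dampingSup α β ρ) ^ k *
        1 ^ (k + 2) := by gcongr
    _ = ENNReal.ofReal (((k + 2 : ℕ) : ℝ) ^ (α + β) * dampingSup α β ρ ^ k) := by
        rw [one_pow, mul_one, ENNReal.ofReal_mul (by positivity), ENNReal.ofReal_pow hS]
end

section
/- Let f(z,w) = Σ_{n,m≥0} a_{n,m} z^n w^m with ‖f‖_{α,β} = Σ_{n,m≥0} |a_{n,m}|(1+n)^α(1+m)^β < ∞ (where α, β ≥ 0), and let λ ∈ ℂ with |λ| < 1. Define L_λ(f)(z,w) = (f(z,w) − f(λ,w))/(z−λ) for z ≠ λ (extended by ∂_z f(λ,w) at z = λ). Then L_λ(f) belongs to the same weighted algebra and ‖L_λ(f)‖_{α,β} ≤ ‖f‖_{α,β}/(1−|λ|). -/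
open Metric Filter Topology

/-!
Since `z ^ N - λ ^ N = (z - λ) * ∑_{k < N} λ ^ k z ^ (N - 1 - k)`, the divided difference has
Taylor coefficients `c (n, m) = ∑ₖ a (n + 1 + k, m) λ ^ k`. The weight `(1 + n) ^ α` only grows
with `n`, so `‖c (n, m)‖` times its weight is at most `∑ₖ ‖a (n + 1 + k, m)‖ λ ^ k` times the
weight of `(n + 1 + k, m)`; as `((n, m), k) ↦ ((n + 1 + k, m), k)` is injective, summing the
geometric series in `k` costs the factor `1 / (1 - |λ|)`. At `z = λ` the series of `c` is
continuous, hence it is also the derivative.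
-/

def shiftIndex (q : (ℕ × ℕ) × ℕ) : (ℕ × ℕ) × ℕ := ((q.1.1 + 1 + q.2, q.1.2), q.2)

lemma shiftIndex_injective : Function.Injective shiftIndex := by
  rintro ⟨⟨n, m⟩, k⟩ ⟨⟨n', m'⟩, k'⟩ h
  simp only [shiftIndex, Prod.mk.injEq] at h
  obtain ⟨⟨hn, rfl⟩, rfl⟩ := h
  simp only [Nat.add_right_cancel_iff] at hn
  rw [hn]

section Geometric

variable {F : ℕ × ℕ → ℝ} {r : ℝ}

lemma summable_mul_geometric (hF0 : 0 ≤ F) (hF : Summable F) (hr0 : 0 ≤ r) (hr : r < 1) :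
    Summable fun q : (ℕ × ℕ) × ℕ => F q.1 * r ^ q.2 :=
  hF.mul_of_nonneg (summable_geometric_of_lt_one hr0 hr) hF0 fun k => pow_nonneg hr0 k

lemma summable_shiftIndex_mul_geometric (hF0 : 0 ≤ F) (hF : Summable F) (hr0 : 0 ≤ r)
    (hr : r < 1) : Summable fun q : (ℕ × ℕ) × ℕ => F (shiftIndex q).1 * r ^ q.2 :=
  (summable_mul_geometric hF0 hF hr0 hr).comp_injective shiftIndex_injective

lemma tsum_shiftIndex_mul_geometric_le (hF0 : 0 ≤ F) (hF : Summable F) (hr0 : 0 ≤ r)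
    (hr : r < 1) :
    ∑' q : (ℕ × ℕ) × ℕ, F (shiftIndex q).1 * r ^ q.2 ≤ (∑' p, F p) / (1 - r) := by
  have hH := summable_mul_geometric hF0 hF hr0 hr
  calc ∑' q : (ℕ × ℕ) × ℕ, F (shiftIndex q).1 * r ^ q.2
      ≤ ∑' q : (ℕ × ℕ) × ℕ, F q.1 * r ^ q.2 :=
        (hH.comp_injective shiftIndex_injective).tsum_le_tsum_of_inj shiftIndex
          shiftIndex_injective (fun q _ => mul_nonneg (hF0 _) (pow_nonneg hr0 _))
          (fun _ => le_rfl) hH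
    _ = (∑' p, F p) / (1 - r) := by
        rw [← hF.tsum_mul_tsum (summable_geometric_of_lt_one hr0 hr) hH,
          tsum_geometric_of_lt_one hr0 hr, div_eq_mul_inv]

end Geometric

lemma hasDerivAt_of_sub_eq_mul {𝕜 : Type*} [NontriviallyNormedField 𝕜] {g G : 𝕜 → 𝕜} {x₀ : 𝕜}
    (hG : ContinuousAt G x₀) (hg : ∀ᶠ x in 𝓝 x₀, g x - g x₀ = (x - x₀) * G x) :
    HasDerivAt g (G x₀) x₀ := by
  rw [hasDerivAt_iff_tendsto_slope]
  refine (hG.tendsto.mono_left nhdsWithin_le_nhds).congr' ?_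
  filter_upwards [nhdsWithin_le_nhds hg, self_mem_nhdsWithin] with x hx hne
  rw [slope_def_field, hx, mul_div_cancel_left₀ _ (sub_ne_zero.2 hne)]

lemma norm_mul_pow_mul_pow_le (c : ℂ) {x w : ℂ} (hx : ‖x‖ ≤ 1) (hw : ‖w‖ ≤ 1) (n m : ℕ) :
    ‖c * x ^ n * w ^ m‖ ≤ ‖c‖ := by
  rw [norm_mul, norm_mul, norm_pow, norm_pow]
  calc ‖c‖ * ‖x‖ ^ n * ‖w‖ ^ m ≤ ‖c‖ * 1 * 1 := by
        gcongr <;> exact pow_le_one₀ (norm_nonneg _) ‹_›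
    _ = ‖c‖ := by ring

noncomputable def divDiffCoeff (a : ℕ × ℕ → ℂ) (lam : ℂ) (p : ℕ × ℕ) : ℂ :=
  ∑' k : ℕ, a (p.1 + 1 + k, p.2) * lam ^ k

section WeightedNorm

variable {a : ℕ × ℕ → ℂ} {lam : ℂ} {u v : ℕ → ℝ}

lemma norm_divDiffCoeff_mul_le (hu0 : ∀ n, 0 ≤ u n) (hu : Monotone u) (hv0 : ∀ m, 0 ≤ v m)
    {p : ℕ × ℕ} (hp : Summable fun k : ℕ =>
      ‖a (p.1 + 1 + k, p.2)‖ * u (p.1 + 1 + k) * v p.2 * ‖lam‖ ^ k) :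
    ‖divDiffCoeff a lam p‖ * u p.1 * v p.2 ≤
      ∑' k : ℕ, ‖a (p.1 + 1 + k, p.2)‖ * u (p.1 + 1 + k) * v p.2 * ‖lam‖ ^ k := by
  have hw : 0 ≤ u p.1 * v p.2 := mul_nonneg (hu0 _) (hv0 _)
  have hc : divDiffCoeff a lam p * (u p.1 * v p.2 : ℝ) =
      ∑' k : ℕ, a (p.1 + 1 + k, p.2) * lam ^ k * (u p.1 * v p.2 : ℝ) := tsum_mul_right.symm
  rw [mul_assoc, ← Complex.norm_of_nonneg hw, ← norm_mul, hc]
  refine tsum_of_norm_bounded hp.hasSum fun k => ?_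
  have hmono : u p.1 ≤ u (p.1 + 1 + k) := hu (by omega)
  rw [norm_mul, norm_mul, norm_pow, Complex.norm_of_nonneg hw]
  calc ‖a (p.1 + 1 + k, p.2)‖ * ‖lam‖ ^ k * (u p.1 * v p.2)
      ≤ ‖a (p.1 + 1 + k, p.2)‖ * ‖lam‖ ^ k * (u (p.1 + 1 + k) * v p.2) := by
        gcongr
        exact hv0 _
    _ = ‖a (p.1 + 1 + k, p.2)‖ * u (p.1 + 1 + k) * v p.2 * ‖lam‖ ^ k := by ring

theorem summable_norm_divDiffCoeff_mul_and_tsum_le (hu0 : ∀ n, 0 ≤ u n) (hu : Monotone u)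
    (hv0 : ∀ m, 0 ≤ v m) (ha : Summable fun p : ℕ × ℕ => ‖a p‖ * u p.1 * v p.2)
    (hlam : ‖lam‖ < 1) :
    Summable (fun p : ℕ × ℕ => ‖divDiffCoeff a lam p‖ * u p.1 * v p.2) ∧
      ∑' p : ℕ × ℕ, ‖divDiffCoeff a lam p‖ * u p.1 * v p.2 ≤
        (∑' p : ℕ × ℕ, ‖a p‖ * u p.1 * v p.2) / (1 - ‖lam‖) := by
  have hF0 : 0 ≤ fun p : ℕ × ℕ => ‖a p‖ * u p.1 * v p.2 := fun p =>
    mul_nonneg (mul_nonneg (norm_nonneg _) (hu0 _)) (hv0 _)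
  have hG := summable_shiftIndex_mul_geometric hF0 ha (norm_nonneg lam) hlam
  have hbound p := norm_divDiffCoeff_mul_le hu0 hu hv0 (hG.prod_factor p)
  have hsum : Summable fun p : ℕ × ℕ => ‖divDiffCoeff a lam p‖ * u p.1 * v p.2 :=
    hG.prod.of_nonneg_of_le (fun p => mul_nonneg (mul_nonneg (norm_nonneg _) (hu0 _)) (hv0 _))
      hbound
  refine ⟨hsum, ?_⟩
  calc ∑' p : ℕ × ℕ, ‖divDiffCoeff a lam p‖ * u p.1 * v p.2
      ≤ ∑' (p : ℕ × ℕ) (k : ℕ), ‖a (p.1 + 1 + k, p.2)‖ * u (p.1 + 1 + k) * v p.2 * ‖lam‖ ^ k :=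
        hsum.tsum_le_tsum hbound hG.prod
    _ = ∑' q : (ℕ × ℕ) × ℕ, ‖a (shiftIndex q).1‖ * u (shiftIndex q).1.1 * v (shiftIndex q).1.2
          * ‖lam‖ ^ q.2 := (hG.tsum_prod' hG.prod_factor).symm
    _ ≤ _ := tsum_shiftIndex_mul_geometric_le hF0 ha (norm_nonneg lam) hlam

end WeightedNorm

section PowerSeries

variable {a : ℕ × ℕ → ℂ} {lam z w : ℂ}

lemma continuousOn_tsum_mul_pow_mul_pow {b : ℕ × ℕ → ℂ} (hb : Summable fun p => ‖b p‖)
    (hw : ‖w‖ ≤ 1) :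
    ContinuousOn (fun x => ∑' p : ℕ × ℕ, b p * x ^ p.1 * w ^ p.2) (closedBall 0 1) :=
  continuousOn_tsum (fun p => by fun_prop) hb fun p x hx =>
    norm_mul_pow_mul_pow_le (b p) (mem_closedBall_zero_iff.mp hx) hw p.1 p.2

theorem hasSum_sub_mul_tsum_divDiffCoeff (ha : Summable fun p => ‖a p‖) (hlam : ‖lam‖ < 1)
    (hz : ‖z‖ ≤ 1) (hw : ‖w‖ ≤ 1) :
    HasSum (fun p : ℕ × ℕ => a p * z ^ p.1 * w ^ p.2 - a p * lam ^ p.1 * w ^ p.2)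
      ((z - lam) * ∑' p : ℕ × ℕ, divDiffCoeff a lam p * z ^ p.1 * w ^ p.2) := by
  set T : (ℕ × ℕ) × ℕ → ℂ := fun q => a (shiftIndex q).1 * lam ^ q.2 * z ^ q.1.1 * w ^ q.1.2
  -- `k < N` guards the truncated subtraction `N - 1 - k`
  set F : (ℕ × ℕ) × ℕ → ℂ := fun q =>
    if q.2 < q.1.1 then a q.1 * w ^ q.1.2 * (lam ^ q.2 * z ^ (q.1.1 - 1 - q.2)) else 0
  have hT : Summable T := by
    refine (summable_shiftIndex_mul_geometric (fun p => norm_nonneg (a p)) ha (norm_nonneg lam)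
      hlam).of_norm_bounded fun q => ?_
    exact (norm_mul_pow_mul_pow_le (a (shiftIndex q).1 * lam ^ q.2) hz hw q.1.1 q.1.2).trans_eq
      (by rw [norm_mul, norm_pow])
  have hTc : HasSum (fun p : ℕ × ℕ => divDiffCoeff a lam p * z ^ p.1 * w ^ p.2) (∑' q, T q) :=
    hT.hasSum.prod_fiberwise fun p => by
      have h : ∑' k, T (p, k) = divDiffCoeff a lam p * z ^ p.1 * w ^ p.2 := by
        simp only [T, shiftIndex, divDiffCoeff, ← tsum_mul_right]
      exact h ▸ (hT.prod_factor p).hasSum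
  have hFT : F ∘ shiftIndex = T := by
    ext ⟨⟨n, m⟩, k⟩
    simp only [Function.comp, F, T, shiftIndex, if_pos (by omega : k < n + 1 + k),
      show n + 1 + k - 1 - k = n by omega]
    ring
  have hF : HasSum F (∑' q, T q) := by
    refine (shiftIndex_injective.hasSum_iff fun q hq => ?_).mp (hFT ▸ hT.hasSum)
    obtain ⟨⟨N, m⟩, k⟩ := q
    refine if_neg fun hk => hq ⟨((N - 1 - k, m), k), ?_⟩
    dsimp only at hk
    simp only [shiftIndex, Prod.mk.injEq, and_true]
    omega
  have hfib : ∀ P : ℕ × ℕ, HasSum (fun k => F (P, k)) (∑ k ∈ Finset.range P.1, F (P, k)) :=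
    fun P => hasSum_sum_of_ne_finset_zero fun k hk =>
      if_neg (by simpa only [Finset.mem_range] using hk)
  have hgeom : ∀ P : ℕ × ℕ, (z - lam) * ∑ k ∈ Finset.range P.1, F (P, k) =
      a P * z ^ P.1 * w ^ P.2 - a P * lam ^ P.1 * w ^ P.2 := fun P => by
    rw [Finset.sum_congr rfl fun k hk => if_pos (Finset.mem_range.mp hk)]
    dsimp only
    rw [← Finset.mul_sum]
    linear_combination (-(a P * w ^ P.2)) * geom_sum₂_mul lam z P.1
  rw [hTc.tsum_eq]
  simpa only [hgeom] using (hF.prod_fiberwise hfib).mul_left (z - lam)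

end PowerSeries

lemma summable_norm_of_one_le_weights {b : ℕ × ℕ → ℂ} {u v : ℕ → ℝ} (hu : ∀ n, 1 ≤ u n)
    (hv : ∀ m, 1 ≤ v m) (hb : Summable fun p : ℕ × ℕ => ‖b p‖ * u p.1 * v p.2) :
    Summable fun p => ‖b p‖ :=
  hb.of_nonneg_of_le (fun _ => norm_nonneg _) fun p =>
    (le_mul_of_one_le_right (norm_nonneg _) (hu p.1)).trans
      (le_mul_of_one_le_right (mul_nonneg (norm_nonneg _) (zero_le_one.trans (hu p.1))) (hv p.2))

/-- The divided difference `L_λ f` stays in the analytic Beurling algebra with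
`‖L_λ f‖_{α,β} ≤ ‖f‖_{α,β}/(1-|λ|)`. -/
theorem stmt_12 (α β : ℝ) (hα : 0 ≤ α) (hβ : 0 ≤ β) (a : ℕ × ℕ → ℂ)
    (hsum : Summable (fun p : ℕ × ℕ =>
      ‖a p‖ * (1 + p.1 : ℝ) ^ α * (1 + p.2 : ℝ) ^ β))
    (f : ℂ → ℂ → ℂ)
    (hf : ∀ z w : ℂ, z ∈ ball (0:ℂ) 1 → w ∈ ball (0:ℂ) 1 →
      HasSum (fun p : ℕ × ℕ => a p * z ^ p.1 * w ^ p.2) (f z w))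
    (lam : ℂ) (hlam : ‖lam‖ < 1) :
    ∃ c : ℕ × ℕ → ℂ,
      Summable (fun p : ℕ × ℕ =>
        ‖c p‖ * (1 + p.1 : ℝ) ^ α * (1 + p.2 : ℝ) ^ β) ∧
      (∑' p : ℕ × ℕ, ‖c p‖ * (1 + p.1 : ℝ) ^ α * (1 + p.2 : ℝ) ^ β) ≤
        (∑' p : ℕ × ℕ, ‖a p‖ * (1 + p.1 : ℝ) ^ α * (1 + p.2 : ℝ) ^ β) / (1 - ‖lam‖) ∧
      ∀ z w : ℂ, z ∈ ball (0:ℂ) 1 → w ∈ ball (0:ℂ) 1 →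
        (if z = lam then deriv (fun ζ => f ζ w) lam
          else (f z w - f lam w) / (z - lam)) =
          ∑' p : ℕ × ℕ, c p * z ^ p.1 * w ^ p.2 := by
  have hone (γ : ℝ) (hγ : 0 ≤ γ) (n : ℕ) : 1 ≤ (1 + n : ℝ) ^ γ :=
    Real.one_le_rpow (by simp) hγ
  have hmono : Monotone fun n : ℕ => (1 + n : ℝ) ^ α := fun n m h =>
    Real.rpow_le_rpow (by positivity) (by gcongr) hα
  obtain ⟨hcsum, hcle⟩ := summable_norm_divDiffCoeff_mul_and_tsum_le
    (u := fun n : ℕ => (1 + n : ℝ) ^ α) (v := fun m : ℕ => (1 + m : ℝ) ^ β)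
    (fun n => by positivity) hmono (fun m => by positivity) hsum hlam
  refine ⟨divDiffCoeff a lam, hcsum, hcle, fun z w hz hw => ?_⟩
  have ha := summable_norm_of_one_le_weights (hone α hα) (hone β hβ) hsum
  have hc := summable_norm_of_one_le_weights (hone α hα) (hone β hβ) hcsum
  rw [mem_ball_zero_iff] at hz hw
  have hrepr : ∀ x : ℂ, ‖x‖ < 1 →
      f x w - f lam w = (x - lam) * ∑' p : ℕ × ℕ, divDiffCoeff a lam p * x ^ p.1 * w ^ p.2 :=
    fun x hx => ((hf x w (mem_ball_zero_iff.2 hx) (mem_ball_zero_iff.2 hw)).sub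
      (hf lam w (mem_ball_zero_iff.2 hlam) (mem_ball_zero_iff.2 hw))).unique
      (hasSum_sub_mul_tsum_divDiffCoeff ha hlam hx.le hw.le)
  split_ifs with hzl
  · rw [hzl]
    refine (hasDerivAt_of_sub_eq_mul
      (G := fun x => ∑' p : ℕ × ℕ, divDiffCoeff a lam p * x ^ p.1 * w ^ p.2) ?_ ?_).deriv
    · exact (continuousOn_tsum_mul_pow_mul_pow hc hw.le).continuousAt
        (closedBall_mem_nhds_of_mem (mem_ball_zero_iff.2 hlam))
    · filter_upwards [isOpen_ball.mem_nhds (mem_ball_zero_iff.2 hlam)] with x hx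
      exact hrepr x (mem_ball_zero_iff.1 hx)
  · rw [hrepr z hz, mul_div_cancel_left₀ _ (sub_ne_zero.2 hzl)]
end
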